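/- Let φ be a Boolean function over a finite variable set T, t ∈ T, and p : T → [0,1] with probabilities of variables other than t held fixed. Viewing P(φ) as a function of x = p(t), its derivative with respect to x equals P(φ[t→true]) - P(φ[t→false]). -/
import Mathlib


open Finset

variable {α : Type*} [DecidableEq α]

/-- Probability of a possible world `W` within tuple set `T`. -/
def worldProb (T : Finset α) (p : α → ℝ) (W : Finset α) : ℝ :=
  (∏ t ∈ W, p t) * ∏ t ∈ T \ W, (1 - p t)

/-- Marginal probability of a Boolean function `φ` over the tuple set `T`. -/
def marg (T : Finset α) (p : α → ℝ) (φ : (α → Bool) → Bool) : ℝ :=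
  ∑ W ∈ T.powerset, if φ (fun t => decide (t ∈ W)) then worldProb T p W else 0

/-- The partial derivative of the marginal probability with respect to the
probability value of tuple t equals P(φ[t→true]) - P(φ[t→false]). -/
theorem marg_hasDerivAt (T : Finset α) (p : α → ℝ)
    (hp : ∀ s ∈ T, 0 ≤ p s ∧ p s ≤ 1)
    (φ : (α → Bool) → Bool) (t : α) (ht : t ∈ T) (x : ℝ) :
    HasDerivAt (fun x : ℝ => marg T (Function.update p t x) φ)
      (marg T (Function.update p t x) (fun v => φ (fun s => if s = t then true else v s)) -
       marg T (Function.update p t x) (fun v => φ (fun s => if s = t then false else v s)))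
      x := by
  classical
  -- abbreviation for the "small" world probability not involving t
  set c : Finset α → ℝ := fun V => worldProb (T.erase t) p V with hc
  have hts : t ∉ T.erase t := Finset.notMem_erase t T
  have hTins : T = insert t (T.erase t) := (Finset.insert_erase ht).symm
  -- worldProb computations
  have hwp1 : ∀ (x : ℝ), ∀ V ∈ (T.erase t).powerset,
      worldProb T (Function.update p t x) V = (1 - x) * c V := by
    intro x V hV
    rw [Finset.mem_powerset] at hV
    have htV : t ∉ V := fun h => hts (hV h)
    have hVT : V ⊆ T := hV.trans (Finset.erase_subset t T)
    have htTV : t ∈ T \ V := Finset.mem_sdiff.2 ⟨ht, htV⟩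
    unfold c
    unfold worldProb
    rw [← Finset.mul_prod_erase (T \ V) _ htTV, ← Finset.erase_sdiff_comm]
    have h1 : ∏ s ∈ V, Function.update p t x s = ∏ s ∈ V, p s :=
      Finset.prod_congr rfl fun s hs => Function.update_of_ne (by rintro rfl; exact htV hs) _ _
    have h2 : ∏ s ∈ T.erase t \ V, (1 - Function.update p t x s)
        = ∏ s ∈ T.erase t \ V, (1 - p s) := by
      refine Finset.prod_congr rfl fun s hs => ?_
      have : s ≠ t := Finset.ne_of_mem_erase (Finset.mem_sdiff.1 hs).1
      rw [Function.update_of_ne this]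
    rw [h1, h2, Function.update_self]
    ring
  have hwp2 : ∀ (x : ℝ), ∀ V ∈ (T.erase t).powerset,
      worldProb T (Function.update p t x) (insert t V) = x * c V := by
    intro x V hV
    rw [Finset.mem_powerset] at hV
    have htV : t ∉ V := fun h => hts (hV h)
    unfold c
    unfold worldProb
    rw [Finset.prod_insert htV]
    have h1 : ∏ s ∈ V, Function.update p t x s = ∏ s ∈ V, p s :=
      Finset.prod_congr rfl fun s hs => Function.update_of_ne (by rintro rfl; exact htV hs) _ _
    have hset : T \ insert t V = T.erase t \ V := by
      ext s
      simp only [Finset.mem_sdiff, Finset.mem_insert, Finset.mem_erase]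
      tauto
    have h2 : ∏ s ∈ T \ insert t V, (1 - Function.update p t x s)
        = ∏ s ∈ T.erase t \ V, (1 - p s) := by
      rw [hset]
      refine Finset.prod_congr rfl fun s hs => ?_
      have : s ≠ t := Finset.ne_of_mem_erase (Finset.mem_sdiff.1 hs).1
      rw [Function.update_of_ne this]
    rw [h1, h2, Function.update_self]
    ring
  -- key affine decomposition of marg
  have key : ∀ (ψ : (α → Bool) → Bool) (x : ℝ),
      marg T (Function.update p t x) ψ =
        x * (∑ V ∈ (T.erase t).powerset,
              if ψ (fun s => decide (s ∈ insert t V)) then c V else 0) +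
        (1 - x) * (∑ V ∈ (T.erase t).powerset,
              if ψ (fun s => decide (s ∈ V)) then c V else 0) := by
    intro ψ x
    unfold marg
    rw [show T.powerset = (insert t (T.erase t)).powerset from by rw [Finset.insert_erase ht],
      Finset.sum_powerset_insert hts]
    rw [Finset.mul_sum, Finset.mul_sum, add_comm]
    congr 1
    · refine Finset.sum_congr rfl fun V hV => ?_
      rw [hwp2 x V hV]
      split <;> simp
    · refine Finset.sum_congr rfl fun V hV => ?_
      rw [hwp1 x V hV]
      split <;> simp
  set Sa : ℝ := ∑ V ∈ (T.erase t).powerset,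
      if φ (fun s => decide (s ∈ insert t V)) then c V else 0 with hSa
  set Sb : ℝ := ∑ V ∈ (T.erase t).powerset,
      if φ (fun s => decide (s ∈ V)) then c V else 0 with hSb
  -- the two boolean restrictions evaluate nicely
  have hbt : ∀ V ∈ (T.erase t).powerset, ∀ b : Finset α,
      (b = V ∨ b = insert t V) →
      (fun s => if s = t then true else decide (s ∈ b)) =
        (fun s => decide (s ∈ insert t V)) := by
    intro V hV b hb
    rw [Finset.mem_powerset] at hV
    have htV : t ∉ V := fun h => hts (hV h)
    funext s
    by_cases hst : s = t
    · subst hst; simp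
    · rcases hb with rfl | rfl
      · simp [hst]
      · simp [hst]
  have hbf : ∀ V ∈ (T.erase t).powerset, ∀ b : Finset α,
      (b = V ∨ b = insert t V) →
      (fun s => if s = t then false else decide (s ∈ b)) =
        (fun s => decide (s ∈ V)) := by
    intro V hV b hb
    rw [Finset.mem_powerset] at hV
    have htV : t ∉ V := fun h => hts (hV h)
    funext s
    by_cases hst : s = t
    · subst hst; simp [htV]
    · rcases hb with rfl | rfl
      · simp [hst]
      · simp [hst, htV]
  have hmt : marg T (Function.update p t x)
      (fun v => φ (fun s => if s = t then true else v s)) = Sa := by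
    rw [key]
    have e1 : (∑ V ∈ (T.erase t).powerset,
        if φ (fun s => if s = t then true else decide (s ∈ insert t V)) then c V else 0) = Sa := by
      refine Finset.sum_congr rfl fun V hV => ?_
      rw [hbt V hV (insert t V) (Or.inr rfl)]
    have e2 : (∑ V ∈ (T.erase t).powerset,
        if φ (fun s => if s = t then true else decide (s ∈ V)) then c V else 0) = Sa := by
      refine Finset.sum_congr rfl fun V hV => ?_
      rw [hbt V hV V (Or.inl rfl)]
    rw [e1, e2]; ring
  have hmf : marg T (Function.update p t x)
      (fun v => φ (fun s => if s = t then false else v s)) = Sb := by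
    rw [key]
    have e1 : (∑ V ∈ (T.erase t).powerset,
        if φ (fun s => if s = t then false else decide (s ∈ insert t V)) then c V else 0) = Sb := by
      refine Finset.sum_congr rfl fun V hV => ?_
      rw [hbf V hV (insert t V) (Or.inr rfl)]
    have e2 : (∑ V ∈ (T.erase t).powerset,
        if φ (fun s => if s = t then false else decide (s ∈ V)) then c V else 0) = Sb := by
      refine Finset.sum_congr rfl fun V hV => ?_
      rw [hbf V hV V (Or.inl rfl)]
    rw [e1, e2]; ring
  rw [hmt, hmf]
  have hfun : (fun x : ℝ => marg T (Function.update p t x) φ)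
      = fun x : ℝ => x * Sa + (1 - x) * Sb := funext fun x => key φ x
  rw [hfun]
  have : HasDerivAt (fun x : ℝ => x * Sa + (1 - x) * Sb)
      (1 * Sa + (0 - 1) * Sb) x :=
    ((hasDerivAt_id x).mul_const Sa).add
      (((hasDerivAt_const x (1 : ℝ)).sub (hasDerivAt_id x)).mul_const Sb)
  simpa using this.congr_deriv (by ring)
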